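/- arXiv:2004.09325 — 7 statements merged into one kernel-verified Lean document; each statement's English description precedes it below -/
import Mathlib

section
/- Let X be a complete CAT(0) metric space. For every R > 0 and every ε > 0, there exists δ > 0 such that for every nonempty bounded closed subset B of X of circumradius at most R and every point c in X, if B is contained in the closed ball of radius r(B) + δ centered at c (where r(B) is the circumradius of B), then the distance from c to the circumcenter of B is at most ε. -/
open Metric

/-- CAT(0) for a metric space, via existence of midpoints satisfying the
CN (Bruhat–Tits) comparison inequality. -/
def IsCAT0 (X : Type*) [MetricSpace X] : Prop :=
  ∀ y z : X, ∃ m : X, dist y m = dist y z / 2 ∧ dist z m = dist y z / 2 ∧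
    ∀ x : X, dist x m ^ 2 ≤ dist x y ^ 2 / 2 + dist x z ^ 2 / 2 - dist y z ^ 2 / 4

/-- The circumradius of a subset: the smallest `r ≥ 0` such that the set is
contained in some closed ball of radius `r`. -/
noncomputable def circumradius {X : Type*} [MetricSpace X] (B : Set X) : ℝ :=
  sInf {r : ℝ | 0 ≤ r ∧ ∃ x : X, B ⊆ closedBall x r}

/-- The circumcenter of a subset: a point `x` such that the set is contained in the
closed ball of radius `circumradius B` around `x` (such a point exists and is unique
for nonempty bounded closed subsets of a complete CAT(0) space). -/
noncomputable def circumcenter {X : Type*} [MetricSpace X] [Nonempty X] (B : Set X) : X :=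
  Classical.epsilon fun x : X => B ⊆ closedBall x (circumradius B)

/-!
Apply the CN inequality at the midpoint of two centres `c₁, c₂` of balls of radii `r₁, r₂`
containing `B`: `B` lies in the ball about the midpoint of squared radius
`r₁²/2 + r₂²/2 - d(c₁,c₂)²/4`, which is therefore at least `r(B)²`. So
`d(c₁,c₂)² ≤ 2r₁² + 2r₂² - 4r(B)²`, and two centres of balls of radius `r(B) + u` containing `B`
are within `√(8 r(B) u + 4u²)` of each other, a bound that is uniform for `r(B) ≤ R`. Approximate
centres therefore form a Cauchy sequence converging to a circumcentre, and any approximate centre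
is close to it.
-/

open Filter Topology

section

variable {X : Type*} [MetricSpace X]

lemma circumradius_nonneg (B : Set X) : 0 ≤ circumradius B :=
  Real.sInf_nonneg fun _ hr => hr.1

lemma circumradius_le_of_subset_closedBall {B : Set X} {x : X} {s : ℝ} (hs : 0 ≤ s)
    (h : B ⊆ closedBall x s) : circumradius B ≤ s :=
  csInf_le ⟨0, fun _ hr => hr.1⟩ ⟨hs, x, h⟩

lemma circumradius_sq_le {B : Set X} (hne : B.Nonempty) {m : X} {A : ℝ}
    (h : ∀ x ∈ B, dist x m ^ 2 ≤ A) : circumradius B ^ 2 ≤ A := by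
  obtain ⟨x₀, hx₀⟩ := hne
  have hA : 0 ≤ A := (sq_nonneg _).trans (h x₀ hx₀)
  have hball : B ⊆ closedBall m √A := fun x hx =>
    (Real.le_sqrt dist_nonneg hA).mpr (h x hx)
  exact (Real.le_sqrt (circumradius_nonneg B) hA).mp
    (circumradius_le_of_subset_closedBall (Real.sqrt_nonneg A) hball)

lemma exists_subset_closedBall_circumradius_add [Nonempty X] {B : Set X}
    (hBd : Bornology.IsBounded B) {δ : ℝ} (hδ : 0 < δ) :
    ∃ x : X, B ⊆ closedBall x (circumradius B + δ) := by
  obtain ⟨x⟩ := ‹Nonempty X›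
  obtain ⟨r, hr⟩ := hBd.subset_closedBall x
  have hradii : {r : ℝ | 0 ≤ r ∧ ∃ x : X, B ⊆ closedBall x r}.Nonempty :=
    ⟨max r 0, le_max_right _ _, x, hr.trans (closedBall_subset_closedBall (le_max_left _ _))⟩
  obtain ⟨s, ⟨-, y, hy⟩, hs⟩ :=
    exists_lt_of_csInf_lt hradii (lt_add_of_pos_right (circumradius B) hδ)
  exact ⟨y, hy.trans (closedBall_subset_closedBall hs.le)⟩

namespace IsCAT0

lemma dist_sq_le_of_subset_closedBall (hX : IsCAT0 X) {B : Set X} (hne : B.Nonempty)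
    {c₁ c₂ : X} {r₁ r₂ : ℝ} (h₁ : B ⊆ closedBall c₁ r₁) (h₂ : B ⊆ closedBall c₂ r₂) :
    dist c₁ c₂ ^ 2 ≤ 2 * r₁ ^ 2 + 2 * r₂ ^ 2 - 4 * circumradius B ^ 2 := by
  obtain ⟨m, -, -, hm⟩ := hX c₁ c₂
  have hB : ∀ x ∈ B, dist x m ^ 2 ≤ r₁ ^ 2 / 2 + r₂ ^ 2 / 2 - dist c₁ c₂ ^ 2 / 4 := by
    intro x hx
    have hx₁ : dist x c₁ ^ 2 ≤ r₁ ^ 2 := pow_le_pow_left₀ dist_nonneg (h₁ hx) 2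
    have hx₂ : dist x c₂ ^ 2 ≤ r₂ ^ 2 := pow_le_pow_left₀ dist_nonneg (h₂ hx) 2
    linarith [hm x]
  linarith [circumradius_sq_le hne hB]

lemma dist_le_of_subset_closedBall_circumradius_add (hX : IsCAT0 X) {B : Set X}
    (hne : B.Nonempty) {c₁ c₂ : X} {u : ℝ} (h₁ : B ⊆ closedBall c₁ (circumradius B + u))
    (h₂ : B ⊆ closedBall c₂ (circumradius B + u)) :
    dist c₁ c₂ ≤ √(8 * circumradius B * u + 4 * u ^ 2) := by
  have h := hX.dist_sq_le_of_subset_closedBall hne h₁ h₂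
  exact Real.le_sqrt_of_sq_le (by linarith)

lemma exists_subset_closedBall_circumradius [CompleteSpace X] [Nonempty X] (hX : IsCAT0 X)
    {B : Set X} (hne : B.Nonempty) (hBd : Bornology.IsBounded B) :
    ∃ x : X, B ⊆ closedBall x (circumradius B) := by
  set r := circumradius B
  have hinv : Tendsto (fun n : ℕ => 1 / ((n : ℝ) + 1)) atTop (𝓝 0) :=
    tendsto_one_div_add_atTop_nhds_zero_nat
  choose x hx using fun n : ℕ =>
    exists_subset_closedBall_circumradius_add hBd (Nat.one_div_pos_of_nat (n := n))
  have hx_mono : ∀ {n N : ℕ}, N ≤ n → B ⊆ closedBall (x n) (r + 1 / ((N : ℝ) + 1)) :=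
    fun hNn => (hx _).trans <| closedBall_subset_closedBall <| add_le_add_right
      (Nat.one_div_le_one_div hNn) r
  set g : ℝ → ℝ := fun u => √(8 * r * u + 4 * u ^ 2)
  have hg : Tendsto (g ∘ fun n : ℕ => 1 / ((n : ℝ) + 1)) atTop (𝓝 0) := by
    have hg0 : g 0 = 0 := by simp [g]
    exact hg0 ▸ ((by fun_prop : Continuous g).tendsto 0).comp hinv
  have hcauchy : CauchySeq x := cauchySeq_of_le_tendsto_0 _ (fun n m N hn hm =>
    hX.dist_le_of_subset_closedBall_circumradius_add hne (hx_mono hn) (hx_mono hm)) hg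
  obtain ⟨p, hp⟩ := cauchySeq_tendsto_of_complete hcauchy
  refine ⟨p, fun y hy => ?_⟩
  have hradius : Tendsto (fun n : ℕ => r + 1 / ((n : ℝ) + 1)) atTop (𝓝 r) := by
    simpa using hinv.const_add r
  exact le_of_tendsto_of_tendsto' (tendsto_const_nhds.dist hp) hradius fun n => hx n hy

lemma subset_closedBall_circumcenter [CompleteSpace X] [Nonempty X] (hX : IsCAT0 X)
    {B : Set X} (hne : B.Nonempty) (hBd : Bornology.IsBounded B) :
    B ⊆ closedBall (circumcenter B) (circumradius B) :=
  Classical.epsilon_spec (hX.exists_subset_closedBall_circumradius hne hBd)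

end IsCAT0

end

/-- Lemma 2.1: approximate circumcenters are close to the circumcenter. -/
theorem stmt0 {X : Type*} [MetricSpace X] [CompleteSpace X] [Nonempty X]
    (hX : IsCAT0 X) :
    ∀ R > (0 : ℝ), ∀ ε > (0 : ℝ), ∃ δ > (0 : ℝ),
      ∀ B : Set X, B.Nonempty → IsClosed B → Bornology.IsBounded B →
        circumradius B ≤ R →
        ∀ c : X, B ⊆ closedBall c (circumradius B + δ) →
          dist c (circumcenter B) ≤ ε := by
  intro R hR ε hε
  set δ := min 1 (ε ^ 2 / (8 * R + 4))
  have hδ₁ : δ ≤ 1 := min_le_left _ _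
  have hδε : (8 * R + 4) * δ ≤ ε ^ 2 :=
    (le_div_iff₀' (by positivity)).mp (min_le_right _ _)
  have hδ : 0 < δ := lt_min one_pos (by positivity)
  refine ⟨δ, hδ, fun B hne _ hBd hBR c hc => ?_⟩
  have hcenter : B ⊆ closedBall (circumcenter B) (circumradius B + δ) :=
    (hX.subset_closedBall_circumcenter hne hBd).trans
      (closedBall_subset_closedBall (le_add_of_nonneg_right hδ.le))
  calc dist c (circumcenter B) ≤ √(8 * circumradius B * δ + 4 * δ ^ 2) :=
        hX.dist_le_of_subset_closedBall_circumradius_add hne hc hcenter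
    _ ≤ √(ε ^ 2) := Real.sqrt_le_sqrt (by
        nlinarith [mul_le_mul_of_nonneg_right hBR hδ.le, mul_le_mul_of_nonneg_left hδ₁ hδ.le])
    _ = ε := Real.sqrt_sq hε.le
end

section
/- Let X be a CAT(-1) space, let x₀ ∈ X, let K ⊆ X be a compact set, and let B be the set of boundary points ξ ∈ ∂_∞X such that the geodesic ray from x₀ to ξ intersects K. Then B is closed in ∂_∞X (with the cone topology). -/
open Metric Set

/-- `γ` is a unit-speed geodesic on the interval `[a,b]`. -/
def IsGeodesicOn {X : Type*} [MetricSpace X] (γ : ℝ → X) (a b : ℝ) : Prop :=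
  ∀ s ∈ Set.Icc a b, ∀ t ∈ Set.Icc a b, dist (γ s) (γ t) = |s - t|

/-- `X` is a CAT(-1) space: it is geodesic, and every geodesic triangle is thinner than
its comparison triangle in the hyperbolic plane (modelled by `UpperHalfPlane` with its
hyperbolic metric), in the sense of comparison of two sides issued from a common
vertex. -/
def IsCATMinusOne (X : Type*) [MetricSpace X] : Prop :=
  (∀ x y : X, ∃ γ : ℝ → X, γ 0 = x ∧ γ (dist x y) = y ∧ IsGeodesicOn γ 0 (dist x y)) ∧
  (∀ (p q r : X) (γ₁ γ₂ : ℝ → X),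
      γ₁ 0 = p → γ₁ (dist p q) = q → IsGeodesicOn γ₁ 0 (dist p q) →
      γ₂ 0 = p → γ₂ (dist p r) = r → IsGeodesicOn γ₂ 0 (dist p r) →
    ∀ (p' q' r' : UpperHalfPlane) (γ₁' γ₂' : ℝ → UpperHalfPlane),
      dist p' q' = dist p q → dist p' r' = dist p r → dist q' r' = dist q r →
      γ₁' 0 = p' → γ₁' (dist p q) = q' → IsGeodesicOn γ₁' 0 (dist p q) →
      γ₂' 0 = p' → γ₂' (dist p r) = r' → IsGeodesicOn γ₂' 0 (dist p r) →
      ∀ s ∈ Set.Icc 0 (dist p q), ∀ t ∈ Set.Icc 0 (dist p r),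
        dist (γ₁ s) (γ₂ t) ≤ dist (γ₁' s) (γ₂' t))

/-- The visual boundary of `X` based at `x₀`, realized as the space of (unit-speed)
geodesic rays issued from `x₀`, equipped with the cone topology (uniform convergence on
compacta, i.e. the compact-open topology on continuous maps). -/
def RayBoundary (X : Type*) [MetricSpace X] (x₀ : X) : Type _ :=
  {r : C(ℝ, X) // r 0 = x₀ ∧ ∀ s t : ℝ, 0 ≤ s → 0 ≤ t → dist (r s) (r t) = |s - t|}

instance (X : Type*) [MetricSpace X] (x₀ : X) : TopologicalSpace (RayBoundary X x₀) :=
  inferInstanceAs (TopologicalSpace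
    {r : C(ℝ, X) // r 0 = x₀ ∧ ∀ s t : ℝ, 0 ≤ s → 0 ≤ t → dist (r s) (r t) = |s - t|})

theorem ContinuousMap.isClosed_setOf_exists_apply_mem {α β : Type*} [TopologicalSpace α]
    [TopologicalSpace β] {s : Set α} (hs : IsCompact s) {K : Set β} (hK : IsClosed K) :
    IsClosed {f : C(α, β) | ∃ t ∈ s, f t ∈ K} := by
  have hopen := ContinuousMap.isOpen_setOfPred_mapsTo hs hK.isOpen_compl
  convert hopen.isClosed_compl using 1
  ext f
  simp [Set.MapsTo]

namespace RayBoundary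

variable {X : Type*} [MetricSpace X] {x₀ : X}

theorem dist_base_apply (r : RayBoundary X x₀) {t : ℝ} (ht : 0 ≤ t) : dist x₀ (r.1 t) = t := by
  have h := r.2.2 0 t le_rfl ht
  rwa [r.2.1, zero_sub, abs_neg, abs_of_nonneg ht] at h

/-- Rays leave every ball around their origin, so they can meet a bounded set only during a
bounded time interval. -/
theorem setOf_exists_apply_mem_eq {K : Set X} {M : ℝ} (hKM : K ⊆ closedBall x₀ M) :
    {r : RayBoundary X x₀ | ∃ t : ℝ, 0 ≤ t ∧ r.1 t ∈ K}
      = (fun r : RayBoundary X x₀ => r.1) ⁻¹' {f : C(ℝ, X) | ∃ t ∈ Icc 0 M, f t ∈ K} := by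
  ext r
  constructor
  · rintro ⟨t, ht0, htK⟩
    have htM : dist x₀ (r.1 t) ≤ M := by simpa [dist_comm] using hKM htK
    exact ⟨t, ⟨ht0, r.dist_base_apply ht0 ▸ htM⟩, htK⟩
  · rintro ⟨t, ⟨ht0, -⟩, htK⟩
    exact ⟨t, ht0, htK⟩

end RayBoundary

theorem stmt2_general {X : Type*} [MetricSpace X] (x₀ : X)
    (K : Set X) (hK : IsCompact K) :
    IsClosed {r : RayBoundary X x₀ | ∃ t : ℝ, 0 ≤ t ∧ r.1 t ∈ K} := by
  obtain ⟨M, hKM⟩ := hK.isBounded.subset_closedBall x₀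
  rw [RayBoundary.setOf_exists_apply_mem_eq hKM]
  exact (ContinuousMap.isClosed_setOf_exists_apply_mem isCompact_Icc hK.isClosed).preimage
    continuous_subtype_val

/-- Lemma 3.10: in a CAT(-1) space, the set of boundary points whose geodesic ray from
`x₀` meets a given compact set `K` is closed in the visual boundary. -/
theorem stmt2 {X : Type*} [MetricSpace X] (hX : IsCATMinusOne X) (x₀ : X)
    (K : Set X) (hK : IsCompact K) :
    IsClosed {r : RayBoundary X x₀ | ∃ t : ℝ, 0 ≤ t ∧ r.1 t ∈ K} :=
  stmt2_general x₀ K hK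
end

section
/- Let D be a countable set and ε ∈ (0,1). For each n let A_n ⊆ D be finite, let α_n, α'_n : A_n → ℝ₊ be functions with sums Υ_n and Υ'_n, and let ν_n, ν'_n be the associated normalized probability measures on D. Suppose there exist K > 0 and M > 0 such that: (1) α_n(σ) ≤ M and α'_n(σ) ≤ M for all n and σ ∈ A_n; (2) Υ_n ≥ K|A_n|, Υ'_n ≥ K|A_n|, and |A_n| → ∞; (3) there exists m such that for every n, all but at most m elements σ ∈ A_n satisfy |α_n(σ) − α'_n(σ)| ≤ min{K/3, K²/(6M)}·ε. Then for all sufficiently large n, the total variation distance ‖ν_n − ν'_n‖₁ is at most ε. -/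
/-!
Writing `S = ∑ α` and `S' = ∑ α'`, the identity
`α/S - α'/S' = (α - α')/S + α' (S' - S)/(S S')` bounds the distance of the normalized
measures by `2 ‖α - α'‖₁ / S`. At most `m` weights differ by up to `M`, the others by at most
`(K/3) ε`, so `‖α - α'‖₁ ≤ m M + |A| K ε / 3`, while `S ≥ K |A|`; once `|A| ≥ 6 m M / (K ε)`
the bound is at most `ε`.
-/

open Filter

namespace Finset

variable {ι : Type*}

theorem sum_abs_div_sum_sub_div_sum_le (s : Finset ι) (f g : ι → ℝ)
    (hg : ∀ i ∈ s, 0 ≤ g i) (hf_sum : 0 < ∑ i ∈ s, f i) (hg_sum : 0 < ∑ i ∈ s, g i) :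
    ∑ i ∈ s, |f i / ∑ j ∈ s, f j - g i / ∑ j ∈ s, g j| ≤
      2 * (∑ i ∈ s, |f i - g i|) / ∑ i ∈ s, f i := by
  set S := ∑ j ∈ s, f j
  set S' := ∑ j ∈ s, g j
  set T := ∑ i ∈ s, |f i - g i|
  have hST : |S - S'| ≤ T := by
    simpa only [S, S', T, ← sum_sub_distrib] using abs_sum_le_sum_abs (fun i => f i - g i) s
  have pointwise : ∀ i ∈ s,
      |f i / S - g i / S'| ≤ |f i - g i| / S + g i * (|S - S'| / (S * S')) := by
    intro i hi
    have split : f i / S - g i / S' = (f i - g i) / S + g i * ((S' - S) / (S * S')) := by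
      field_simp
      ring
    rw [split]
    refine (abs_add_le _ _).trans_eq ?_
    rw [abs_div, abs_of_pos hf_sum, abs_mul, abs_div, abs_of_pos (mul_pos hf_sum hg_sum),
      abs_of_nonneg (hg i hi), abs_sub_comm S' S]
  calc ∑ i ∈ s, |f i / S - g i / S'|
      ≤ ∑ i ∈ s, (|f i - g i| / S + g i * (|S - S'| / (S * S'))) := sum_le_sum pointwise
    _ = T / S + |S - S'| / S := by
        rw [sum_add_distrib, ← sum_div, ← sum_mul]
        change T / S + S' * _ = _
        field_simp
    _ ≤ 2 * T / S := by
        rw [two_mul, add_div]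
        gcongr

theorem sum_le_card_mul_add_card_mul [DecidableEq ι] {s B : Finset ι} {h : ι → ℝ} {M η : ℝ}
    (hBs : B ⊆ s) (hη : 0 ≤ η) (hB : ∀ i ∈ B, h i ≤ M) (hsB : ∀ i ∈ s, i ∉ B → h i ≤ η) :
    ∑ i ∈ s, h i ≤ B.card * M + s.card * η := by
  rw [← sum_sdiff hBs, add_comm]
  have on_B : ∑ i ∈ B, h i ≤ B.card * M := by
    simpa using sum_le_card_nsmul B h M hB
  have off_B : ∑ i ∈ s \ B, h i ≤ (s \ B).card * η := by
    simpa using sum_le_card_nsmul (s \ B) h η fun i hi =>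
      hsB i (mem_sdiff.1 hi).1 (mem_sdiff.1 hi).2
  have card_le : ((s \ B).card : ℝ) ≤ s.card := by exact_mod_cast card_le_card sdiff_subset
  linarith [mul_le_mul_of_nonneg_right card_le hη]

end Finset

open Finset in
theorem stmt3_general {D : Type*}
    (ε : ℝ) (hε0 : 0 < ε)
    (A : ℕ → Finset D) (α α' : ℕ → D → ℝ)
    (hnonneg : ∀ n, ∀ σ ∈ A n, 0 ≤ α n σ)
    (hnonneg' : ∀ n, ∀ σ ∈ A n, 0 ≤ α' n σ)
    (K M : ℝ) (hK : 0 < K) (hM : 0 < M)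
    (hbound : ∀ n, ∀ σ ∈ A n, α n σ ≤ M ∧ α' n σ ≤ M)
    (hlow : ∀ n, K * (A n).card ≤ ∑ σ ∈ A n, α n σ ∧
      K * (A n).card ≤ ∑ σ ∈ A n, α' n σ)
    (hcard : Tendsto (fun n => ((A n).card : ℝ)) atTop atTop)
    (m : ℕ)
    (hclose : ∀ n, ∃ B : Finset D, B ⊆ A n ∧ B.card ≤ m ∧
      ∀ σ ∈ A n, σ ∉ B →
        |α n σ - α' n σ| ≤ min (K / 3) (K ^ 2 / (6 * M)) * ε) :
    ∀ᶠ n in atTop,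
      ∑ σ ∈ A n,
        |α n σ / (∑ τ ∈ A n, α n τ) - α' n σ / (∑ τ ∈ A n, α' n τ)| ≤ ε := by
  classical
  filter_upwards [hcard.eventually_ge_atTop (max 1 (6 * m * M / (K * ε)))] with n hn
  obtain ⟨B, hBA, hBm, hB⟩ := hclose n
  have hcard_pos : (1 : ℝ) ≤ (A n).card := (le_max_left _ _).trans hn
  have hcard_large : 6 * m * M ≤ K * ε * (A n).card :=
    (div_le_iff₀' (by positivity)).1 ((le_max_right _ _).trans hn)
  have hsum_pos : 0 < ∑ σ ∈ A n, α n σ := lt_of_lt_of_le (by positivity) (hlow n).1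
  have hsum_pos' : 0 < ∑ σ ∈ A n, α' n σ := lt_of_lt_of_le (by positivity) (hlow n).2
  have hdist : ∑ σ ∈ A n, |α n σ - α' n σ| ≤ B.card * M + (A n).card * (K / 3 * ε) :=
    sum_le_card_mul_add_card_mul hBA (by positivity)
      (fun σ hσ => abs_sub_le_of_nonneg_of_le (hnonneg n σ (hBA hσ)) (hbound n σ (hBA hσ)).1
        (hnonneg' n σ (hBA hσ)) (hbound n σ (hBA hσ)).2)
      (fun σ hσ hσB => (hB σ hσ hσB).trans
        (mul_le_mul_of_nonneg_right (min_le_left _ _) hε0.le))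
  have hBm' : (B.card : ℝ) * M ≤ m * M := by gcongr
  refine (sum_abs_div_sum_sub_div_sum_le (A n) (α n) (α' n) (hnonneg' n) hsum_pos
    hsum_pos').trans ?_
  rw [div_le_iff₀ hsum_pos]
  nlinarith [mul_le_mul_of_nonneg_left (hlow n).1 hε0.le]

/-- Lemma 3.8: comparison of normalized weighted probability measures on a countable set. -/
theorem stmt3 {D : Type*} [Countable D]
    (ε : ℝ) (hε0 : 0 < ε) (hε1 : ε < 1)
    (A : ℕ → Finset D) (α α' : ℕ → D → ℝ)
    (hnonneg : ∀ n, ∀ σ ∈ A n, 0 ≤ α n σ)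
    (hnonneg' : ∀ n, ∀ σ ∈ A n, 0 ≤ α' n σ)
    (K M : ℝ) (hK : 0 < K) (hM : 0 < M)
    (hbound : ∀ n, ∀ σ ∈ A n, α n σ ≤ M ∧ α' n σ ≤ M)
    (hlow : ∀ n, K * (A n).card ≤ ∑ σ ∈ A n, α n σ ∧
      K * (A n).card ≤ ∑ σ ∈ A n, α' n σ)
    (hcard : Tendsto (fun n => ((A n).card : ℝ)) atTop atTop)
    (m : ℕ)
    (hclose : ∀ n, ∃ B : Finset D, B ⊆ A n ∧ B.card ≤ m ∧
      ∀ σ ∈ A n, σ ∉ B →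
        |α n σ - α' n σ| ≤ min (K / 3) (K ^ 2 / (6 * M)) * ε) :
    ∀ᶠ n in atTop,
      ∑ σ ∈ A n,
        |α n σ / (∑ τ ∈ A n, α n τ) - α' n σ / (∑ τ ∈ A n, α' n τ)| ≤ ε :=
  stmt3_general ε hε0 A α α' hnonneg hnonneg' K M hK hM hbound hlow hcard m hclose
end

section
/- Let G be a countable group acting by Borel automorphisms on a Borel space Δ such that the action is Borel amenable. Then for every k ≥ 1, the induced G-action on the set of nonempty subsets of Δ of cardinality at most k is Borel amenable. -/
open Filter

/-- Probability measures on a countable group `G`, viewed as ℓ¹ densities. -/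
def ProbDensity (G : Type*) : Type _ :=
  {μ : G → ℝ // (∀ g, 0 ≤ μ g) ∧ HasSum μ 1}

instance (G : Type*) : MeasurableSpace (ProbDensity G) :=
  inferInstanceAs (MeasurableSpace {μ : G → ℝ // (∀ g, 0 ≤ μ g) ∧ HasSum μ 1})

/-- Borel amenability of an action of a countable group `G` on a Borel space `X`:
there is a sequence of Borel maps `X → Prob(G)` which is asymptotically equivariant
in ℓ¹-norm.  Here `(g·μ)(h) = μ(g⁻¹h)`. -/
def IsBorelAmenableAction (G : Type*) [Group G] [Countable G]
    (X : Type*) [MeasurableSpace X] (act : G → X → X) : Prop :=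
  ∃ ν : ℕ → X → ProbDensity G,
    (∀ n, Measurable (ν n)) ∧
    ∀ (g : G) (x : X),
      Tendsto (fun n => ∑' h : G, |(ν n (act g x)).1 h - (ν n x).1 (g⁻¹ * h)|)
        atTop (nhds 0)

/-- The set of nonempty subsets of `Δ` of cardinality at most `k`. -/
def SetCardLE (k : ℕ) (Δ : Type*) : Type _ :=
  {S : Set Δ // S.Nonempty ∧ S.Finite ∧ S.ncard ≤ k}

/-- The natural Borel structure on `P_{≤k}(Δ)`: the quotient Borel structure induced by
the map `Δ^k → P_{≤k}(Δ)` sending a tuple to its range. -/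
instance (k : ℕ) (Δ : Type*) [MeasurableSpace Δ] : MeasurableSpace (SetCardLE k Δ) :=
  MeasurableSpace.comap (fun S => S.1)
    (MeasurableSpace.map (fun f : Fin k → Δ => Set.range f) MeasurableSpace.pi)

/-!
For a finite nonempty `S ⊆ Δ` replace the densities `ν(x)`, `x ∈ S`, by their pointwise maximum
and renormalise. The maximum depends only on the set `S`; for `S = range u` it is a supremum over
the coordinates of `u ∈ Δᵏ`, hence Borel in `u` without any assumption on the diagonal of `Δ`.
Taking maxima is 1-Lipschitz for `ℓ¹`, i.e. `‖max a - max b‖₁ ≤ ∑ᵢ ‖aᵢ - bᵢ‖₁`, and as the maximum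
has mass at least `1`, renormalising at most doubles `ℓ¹` distances. Hence the new maps are
asymptotically equivariant as soon as the `ν_n` are.
-/

open Set

namespace Finset

variable {ι : Type*} (s : Finset ι) (hs : s.Nonempty)

theorem sup'_sub_sup'_le_sum_abs (f g : ι → ℝ) :
    s.sup' hs f - s.sup' hs g ≤ ∑ i ∈ s, |f i - g i| := by
  rw [sub_le_iff_le_add']
  refine sup'_le hs f fun i hi => ?_
  calc f i ≤ g i + |f i - g i| := by linarith [le_abs_self (f i - g i)]
    _ ≤ s.sup' hs g + ∑ j ∈ s, |f j - g j| :=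
      add_le_add (le_sup' g hi) (single_le_sum (fun j _ => abs_nonneg (f j - g j)) hi)

theorem abs_sup'_sub_sup'_le_sum_abs (f g : ι → ℝ) :
    |s.sup' hs f - s.sup' hs g| ≤ ∑ i ∈ s, |f i - g i| :=
  abs_sub_le_iff.2 ⟨sup'_sub_sup'_le_sum_abs s hs f g, by
    simpa only [abs_sub_comm] using sup'_sub_sup'_le_sum_abs s hs g f⟩

theorem abs_sup'_le_sum_abs (f : ι → ℝ) : |s.sup' hs f| ≤ ∑ i ∈ s, |f i| := by
  obtain ⟨i, hi, hfi⟩ := s.exists_mem_eq_sup' hs f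
  rw [hfi]
  exact single_le_sum (fun j _ => abs_nonneg (f j)) hi

variable {G : Type*} {a b : ι → G → ℝ}

theorem summable_sup' (ha : ∀ i, Summable (a i)) : Summable fun h => s.sup' hs (a · h) :=
  .of_norm_bounded (summable_sum fun i _ => (ha i).abs) fun _ => s.abs_sup'_le_sum_abs hs _

theorem sup'_nonneg (ha : ∀ i, 0 ≤ a i) (h : G) : 0 ≤ s.sup' hs (a · h) :=
  let ⟨_, hi⟩ := hs
  le_sup'_of_le _ hi (ha _ h)

theorem one_le_tsum_sup' (ha : ∀ i, HasSum (a i) 1) : 1 ≤ ∑' h, s.sup' hs (a · h) :=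
  let ⟨i, hi⟩ := hs
  (ha i).tsum_eq ▸ Summable.tsum_le_tsum (fun h => le_sup' (a · h) hi) (ha i).summable
    (s.summable_sup' hs fun i => (ha i).summable)

theorem tsum_abs_sup'_sub_sup'_le (ha : ∀ i, Summable (a i)) (hb : ∀ i, Summable (b i)) :
    ∑' h, |s.sup' hs (a · h) - s.sup' hs (b · h)| ≤ ∑ i ∈ s, ∑' h, |a i h - b i h| := by
  have hab : ∀ i ∈ s, Summable fun h => |a i h - b i h| := fun i _ => ((ha i).sub (hb i)).abs
  rw [← Summable.tsum_finsetSum hab]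
  exact Summable.tsum_le_tsum (fun h => s.abs_sup'_sub_sup'_le_sum_abs hs _ _)
    ((s.summable_sup' hs ha).sub (s.summable_sup' hs hb)).abs (summable_sum hab)

end Finset

section Normalize

variable {G : Type*}

theorem hasSum_inv_tsum_smul {A : G → ℝ} (hA : Summable A) (hA0 : ∑' h, A h ≠ 0) :
    HasSum ((∑' h, A h)⁻¹ • A) 1 := by
  have := hA.hasSum.const_smul (∑' h, A h)⁻¹
  rwa [smul_eq_mul, inv_mul_cancel₀ hA0] at this

theorem inv_tsum_smul_comp_equiv {H : Type*} (A : G → ℝ) (e : H ≃ G) :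
    ((∑' h, A h)⁻¹ • A) ∘ e = (∑' h, A (e h))⁻¹ • (A ∘ e) := by
  rw [e.tsum_eq]
  rfl

theorem tsum_abs_inv_tsum_smul_sub_le {A B : G → ℝ} (hB0 : 0 ≤ B)
    (hA : Summable A) (hB : Summable B) (hM : 0 < ∑' h, A h) (hm : 0 < ∑' h, B h) :
    ∑' h, |((∑' h, A h)⁻¹ • A) h - ((∑' h, B h)⁻¹ • B) h|
      ≤ 2 * (∑' h, |A h - B h|) / ∑' h, A h := by
  set M := ∑' h, A h
  set m := ∑' h, B h
  set D := ∑' h, |A h - B h|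
  have hD : Summable fun h => |A h - B h| := (hA.sub hB).abs
  have hmM : |m - M| ≤ D := by
    rw [← hB.tsum_sub hA, ← Real.norm_eq_abs]
    refine (norm_tsum_le_tsum_norm ?_).trans_eq ?_
    · simpa only [Real.norm_eq_abs, abs_sub_comm (B _)] using hD
    · simp only [Real.norm_eq_abs, abs_sub_comm (B _)]
      rfl
  have hpointwise : ∀ h, |(M⁻¹ • A) h - (m⁻¹ • B) h| ≤ M⁻¹ * |A h - B h| + |M⁻¹ - m⁻¹| * B h := by
    intro h
    calc |(M⁻¹ • A) h - (m⁻¹ • B) h| = |M⁻¹ * (A h - B h) + (M⁻¹ - m⁻¹) * B h| := by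
          simp only [Pi.smul_apply, smul_eq_mul]; ring_nf
      _ ≤ M⁻¹ * |A h - B h| + |M⁻¹ - m⁻¹| * B h := by
          grw [abs_add_le, abs_mul, abs_mul, abs_of_pos (inv_pos.2 hM), abs_of_nonneg (hB0 h)]
  have hbound : Summable fun h => M⁻¹ * |A h - B h| + |M⁻¹ - m⁻¹| * B h :=
    (hD.mul_left _).add (hB.mul_left _)
  calc ∑' h, |(M⁻¹ • A) h - (m⁻¹ • B) h|
      ≤ ∑' h, (M⁻¹ * |A h - B h| + |M⁻¹ - m⁻¹| * B h) :=
        Summable.tsum_le_tsum hpointwise (.of_nonneg_of_le (fun _ => abs_nonneg _) hpointwise hbound) hbound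
    _ = M⁻¹ * D + |M⁻¹ - m⁻¹| * m := by
        rw [(hD.mul_left _).tsum_add (hB.mul_left _), tsum_mul_left, tsum_mul_left]
    _ = (D + |m - M|) / M := by
        rw [inv_sub_inv hM.ne' hm.ne', abs_div, abs_of_pos (mul_pos hM hm)]
        field_simp
    _ ≤ 2 * D / M := by gcongr; linarith

end Normalize

section MaxDensity

variable {G Δ : Type*}

noncomputable def maxDensity (ν : Δ → ProbDensity G) (S : Set Δ) (h : G) : ℝ :=
  sSup ((fun x => (ν x).1 h) '' S)

noncomputable def normalizedMaxDensity (ν : Δ → ProbDensity G) (S : Set Δ) : G → ℝ :=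
  (∑' h, maxDensity ν S h)⁻¹ • maxDensity ν S

theorem maxDensity_eq_sup' (ν : Δ → ProbDensity G) {S : Set Δ} (hS : S.Finite)
    (hne : S.Nonempty) (h : G) :
    maxDensity ν S h = hS.toFinset.sup' (hS.toFinset_nonempty.2 hne) fun x => (ν x).1 h := by
  rw [Finset.sup'_eq_csSup_image, hS.coe_toFinset, maxDensity]

theorem maxDensity_image (ν : Δ → ProbDensity G) (f : Δ → Δ) (S : Set Δ) :
    maxDensity ν (f '' S) = maxDensity (ν ∘ f) S := by
  ext h
  rw [maxDensity, maxDensity, image_image]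
  rfl

theorem maxDensity_range {k : ℕ} (ν : Δ → ProbDensity G) (u : Fin k → Δ) (h : G) :
    maxDensity ν (range u) h = ⨆ i, (ν (u i)).1 h := by
  rw [maxDensity, ← range_comp]
  rfl

theorem normalizedMaxDensity_nonneg_hasSum (ν : Δ → ProbDensity G) {S : Set Δ}
    (hS : S.Finite) (hne : S.Nonempty) :
    (∀ h, 0 ≤ normalizedMaxDensity ν S h) ∧ HasSum (normalizedMaxDensity ν S) 1 := by
  have hs := hS.toFinset_nonempty.2 hne
  have hmax : maxDensity ν S = fun h => hS.toFinset.sup' hs fun x => (ν x).1 h :=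
    funext (maxDensity_eq_sup' ν hS hne)
  have hM := hS.toFinset.one_le_tsum_sup' hs fun x => (ν x).2.2
  rw [normalizedMaxDensity, hmax]
  refine ⟨fun h => mul_nonneg (by positivity) ?_, hasSum_inv_tsum_smul ?_ (by positivity)⟩
  · exact hS.toFinset.sup'_nonneg hs (fun x => (ν x).2.1) h
  · exact hS.toFinset.summable_sup' hs fun x => (ν x).2.2.summable

theorem tsum_abs_normalizedMaxDensity_image_sub_le (ν : Δ → ProbDensity G) (f : Δ → Δ)
    (e : G ≃ G) {S : Set Δ} (hS : S.Finite) (hne : S.Nonempty) :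
    ∑' h, |normalizedMaxDensity ν (f '' S) h - normalizedMaxDensity ν S (e h)|
      ≤ 2 * ∑ x ∈ hS.toFinset, ∑' h, |(ν (f x)).1 h - (ν x).1 (e h)| := by
  have hs := hS.toFinset_nonempty.2 hne
  set a : Δ → G → ℝ := fun x => (ν (f x)).1
  set b : Δ → G → ℝ := fun x => (ν x).1 ∘ e
  have ha : ∀ x, HasSum (a x) 1 := fun x => (ν (f x)).2.2
  have hb : ∀ x, HasSum (b x) 1 := fun x => e.hasSum_iff.2 (ν x).2.2
  have hA : maxDensity ν (f '' S) = fun h => hS.toFinset.sup' hs (a · h) := by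
    rw [maxDensity_image]
    exact funext (maxDensity_eq_sup' _ hS hne)
  have hB : ∀ h, maxDensity ν S (e h) = hS.toFinset.sup' hs (b · h) := fun h =>
    maxDensity_eq_sup' ν hS hne (e h)
  have hM := hS.toFinset.one_le_tsum_sup' hs ha
  have hm := hS.toFinset.one_le_tsum_sup' hs hb
  have hsuma : ∀ x, Summable (a x) := fun x => (ha x).summable
  have hsumb : ∀ x, Summable (b x) := fun x => (hb x).summable
  calc ∑' h, |normalizedMaxDensity ν (f '' S) h - normalizedMaxDensity ν S (e h)|
      = ∑' h, |normalizedMaxDensity ν (f '' S) h - (normalizedMaxDensity ν S ∘ e) h| := rfl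
    _ ≤ 2 * (∑' h, |hS.toFinset.sup' hs (a · h) - hS.toFinset.sup' hs (b · h)|)
          / ∑' h, hS.toFinset.sup' hs (a · h) := by
        rw [normalizedMaxDensity, normalizedMaxDensity, inv_tsum_smul_comp_equiv]
        simp only [Function.comp_def, hA, hB]
        exact tsum_abs_inv_tsum_smul_sub_le (hS.toFinset.sup'_nonneg hs (a := b)
          fun x h => (ν x).2.1 (e h)) (hS.toFinset.summable_sup' hs hsuma)
          (hS.toFinset.summable_sup' hs hsumb) (zero_lt_one.trans_le hM)
          (zero_lt_one.trans_le hm)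
    _ ≤ 2 * ∑' h, |hS.toFinset.sup' hs (a · h) - hS.toFinset.sup' hs (b · h)| :=
        div_le_self (by positivity) hM
    _ ≤ 2 * ∑ x ∈ hS.toFinset, ∑' h, |a x h - b x h| := by
        gcongr
        exact hS.toFinset.tsum_abs_sup'_sub_sup'_le hs hsuma hsumb

variable [Countable G] [MeasurableSpace Δ]

theorem measurable_normalizedMaxDensity_range {k : ℕ} {ν : Δ → ProbDensity G}
    (hν : Measurable ν) : Measurable fun u : Fin k → Δ => normalizedMaxDensity ν (range u) := by
  have hmax : Measurable fun u : Fin k → Δ => maxDensity ν (range u) := by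
    refine measurable_pi_lambda _ fun h => ?_
    simp only [maxDensity_range]
    exact .iSup fun i => ((measurable_pi_apply h).comp measurable_subtype_coe).comp
      (hν.comp (measurable_pi_apply i))
  exact (Measurable.tsum fun h => (measurable_pi_apply h).comp hmax).inv.smul hmax

end MaxDensity

namespace SetCardLE

variable {G Δ : Type*} {k : ℕ}

noncomputable def density (ν : Δ → ProbDensity G) (S : SetCardLE k Δ) : ProbDensity G :=
  ⟨normalizedMaxDensity ν S.1, normalizedMaxDensity_nonneg_hasSum ν S.2.2.1 S.2.1⟩

variable [MeasurableSpace Δ]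

theorem measurable_of_measurable_range {β : Type*} [MeasurableSpace β] {F : Set Δ → β}
    (hF : Measurable fun u : Fin k → Δ => F (range u)) :
    Measurable fun S : SetCardLE k Δ => F S.1 :=
  fun _ ht => ⟨F ⁻¹' _, hF ht, rfl⟩

theorem measurable_density [Countable G] {ν : Δ → ProbDensity G} (hν : Measurable ν) :
    Measurable (density (k := k) ν) :=
  (measurable_of_measurable_range (measurable_normalizedMaxDensity_range hν)).subtype_mk

end SetCardLE

theorem stmt5_general {G Δ : Type*} [Group G] [Countable G] [MeasurableSpace Δ]
    [MulAction G Δ]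
    (k : ℕ)
    (h : IsBorelAmenableAction G Δ (fun g x => g • x)) :
    IsBorelAmenableAction G (SetCardLE k Δ)
      (fun g S => ⟨(fun x => g • x) '' S.1,
        S.2.1.image _, S.2.2.1.image _,
        le_trans (Set.ncard_image_le S.2.2.1) S.2.2.2⟩) := by
  obtain ⟨ν, hν_meas, hν_equiv⟩ := h
  refine ⟨fun n => SetCardLE.density (ν n), fun n => SetCardLE.measurable_density (hν_meas n),
    fun g S => ?_⟩
  have hlim := (tendsto_finsetSum S.2.2.1.toFinset fun x _ => hν_equiv g x).const_mul 2
  rw [Finset.sum_const_zero, mul_zero] at hlim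
  exact squeeze_zero (fun n => tsum_nonneg fun _ => abs_nonneg _)
    (fun n => tsum_abs_normalizedMaxDensity_image_sub_le (ν n) (g • ·) (Equiv.mulLeft g⁻¹)
      S.2.2.1 S.2.1) hlim

/-- Lemma 5.14: if a countable group acts Borel amenably on a Borel space `Δ`, then the
induced action on the space of nonempty subsets of cardinality at most `k` is Borel
amenable. -/
theorem stmt5 {G Δ : Type*} [Group G] [Countable G] [MeasurableSpace Δ]
    [MulAction G Δ] (hmeas : ∀ g : G, Measurable (fun x : Δ => g • x))
    (k : ℕ) (hk : 1 ≤ k)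
    (h : IsBorelAmenableAction G Δ (fun g x => g • x)) :
    IsBorelAmenableAction G (SetCardLE k Δ)
      (fun g S => ⟨(fun x => g • x) '' S.1,
        S.2.1.image _, S.2.2.1.image _,
        le_trans (Set.ncard_image_le S.2.2.1) S.2.2.2⟩) :=
  stmt5_general k h
end

section
/- Let G_Γ be a 2-dimensional Artin group with defining graph Γ, acting on its modified Deligne complex D_Γ. If two standard trees T₁ and T₂ in D_Γ share a rank one vertex, then T₁ = T₂. -/
/-
The stabilizer of the rank one vertex `gG_s` is `g⟨s⟩g⁻¹`, so an element fixing it is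
`g s^k g⁻¹` for some `k`. The homomorphism `G_Γ → ℤ` sending every standard generator to `1`
(well defined since both sides of a braid relation have the same length) takes the value `k` on
it; a conjugate of a standard generator has length `1`, so it must be `g s g⁻¹`. Hence the two
conjugates defining the trees coincide, and so do the trees.
-/

namespace ArtinME

variable {V : Type*}

/-- The alternating word `sts⋯` of length `n` in the free group on `V`. -/
def altWord (s t : V) : ℕ → FreeGroup V
  | 0 => 1
  | n + 1 => FreeGroup.of s * altWord t s n

/-- The Artin relators of the labeled graph `(V, m)`.  The label `m s t = 0` encodes
the absence of an edge (`m_{st} = ∞`); labels `≥ 2` give braid relations. -/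
def artinRels (m : V → V → ℕ) : Set (FreeGroup V) :=
  {r | ∃ s t : V, 2 ≤ m s t ∧ r = altWord s t (m s t) * (altWord t s (m s t))⁻¹}

/-- The Artin group with defining labeled graph `(V, m)`. -/
def ArtinGroup (m : V → V → ℕ) : Type _ := PresentedGroup (artinRels m)

instance (m : V → V → ℕ) : Group (ArtinGroup m) :=
  inferInstanceAs (Group (PresentedGroup (artinRels m)))

/-- The standard generator of `ArtinGroup m` associated to a vertex `s`. -/
def gen (m : V → V → ℕ) (s : V) : ArtinGroup m :=
  PresentedGroup.of (rels := artinRels m) s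

/-- The generator of the center `Z_{st}` of the dihedral-type parabolic `G_{st}`:
`(st)^{m_{st}}` if `m_{st}` is odd, `(st)^{m_{st}/2}` if `m_{st}` is even. -/
def zElt (m : V → V → ℕ) (s t : V) : ArtinGroup m :=
  if m s t % 2 = 1 then (gen m s * gen m t) ^ (m s t)
  else (gen m s * gen m t) ^ (m s t / 2)

/-- The conjugate `gHg⁻¹` of a subgroup. -/
def conjSub {G : Type*} [Group G] (g : G) (H : Subgroup G) : Subgroup G :=
  H.map (MulAut.conj g).toMonoidHom

/-- The edge (dihedral) parabolic subgroup `G_{st}`. -/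
def edgeSub (m : V → V → ℕ) (s t : V) : Subgroup (ArtinGroup m) :=
  Subgroup.closure {gen m s, gen m t}

/-- The cyclic vertex parabolic subgroup `G_s = ⟨s⟩`. -/
def vertSub (m : V → V → ℕ) (s : V) : Subgroup (ArtinGroup m) :=
  Subgroup.zpowers (gen m s)

/-- Edges of the defining graph. -/
def EdgeIdx (m : V → V → ℕ) : Type _ := {p : V × V // 2 ≤ m p.1 p.2}

/-- The vertex set of the modified Deligne complex `D_Γ`: rank 0 vertices are group
elements (cosets of the trivial subgroup), rank 1 vertices are cosets `gG_s`, and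
rank 2 vertices are cosets `gG_{st}` for edges `st`. -/
def DVertex (m : V → V → ℕ) : Type _ :=
  ArtinGroup m ⊕
    ((Σ s : V, ArtinGroup m ⧸ vertSub m s) ⊕
      (Σ e : EdgeIdx m, ArtinGroup m ⧸ edgeSub m e.1.1 e.1.2))

/-- The action of `G_Γ` on the vertices of the modified Deligne complex, by left
translation of cosets. -/
def vact (m : V → V → ℕ) (h : ArtinGroup m) : DVertex m → DVertex m
  | Sum.inl g => Sum.inl (h * g)
  | Sum.inr (Sum.inl ⟨s, x⟩) => Sum.inr (Sum.inl ⟨s, h • x⟩)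
  | Sum.inr (Sum.inr ⟨e, x⟩) => Sum.inr (Sum.inr ⟨e, h • x⟩)

/-- The fixed vertex set `F_h` of an element `h` in the modified Deligne complex. -/
def FixSet (m : V → V → ℕ) (h : ArtinGroup m) : Set (DVertex m) :=
  {v | vact m h v = v}

/-- Rank one vertices of the modified Deligne complex. -/
def IsRankOne (m : V → V → ℕ) (v : DVertex m) : Prop :=
  ∃ (s : V) (x : ArtinGroup m ⧸ vertSub m s), v = Sum.inr (Sum.inl ⟨s, x⟩)

/-- Standard trees: fixed point sets of conjugates of standard generators. -/
def IsStandardTree (m : V → V → ℕ) (T : Set (DVertex m)) : Prop :=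
  ∃ (g : ArtinGroup m) (s : V), T = FixSet m (g * gen m s * g⁻¹)

/-- The labeled graph `(V, m)` defines a 2-dimensional Artin group: every triangle of
`Γ` with labels `m, n, r` satisfies `1/m + 1/n + 1/r ≤ 1`. -/
def TwoDimensional (m : V → V → ℕ) : Prop :=
  ∀ s t u : V, 2 ≤ m s t → 2 ≤ m t u → 2 ≤ m s u →
    (1 : ℚ) / (m s t : ℚ) + (1 : ℚ) / (m t u : ℚ) + (1 : ℚ) / (m s u : ℚ) ≤ 1

theorem lift_const_altWord {G : Type*} [Group G] (a : G) (s t : V) (n : ℕ) :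
    FreeGroup.lift (fun _ : V => a) (altWord s t n) = a ^ n := by
  induction n generalizing s t with
  | zero => simp [altWord]
  | succ n ih => simp [altWord, ih, pow_succ']

def lengthHom (m : V → V → ℕ) : ArtinGroup m →* Multiplicative ℤ :=
  PresentedGroup.toGroup (f := fun _ : V => Multiplicative.ofAdd (1 : ℤ)) <| by
    rintro r ⟨s, t, -, rfl⟩
    simp [lift_const_altWord]

lemma lengthHom_gen (m : V → V → ℕ) (s : V) :
    lengthHom m (gen m s) = Multiplicative.ofAdd 1 :=
  PresentedGroup.toGroup.of _

lemma lengthHom_conj_gen_zpow (m : V → V → ℕ) (g : ArtinGroup m) (s : V) (k : ℤ) :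
    lengthHom m (g * gen m s ^ k * g⁻¹) = Multiplicative.ofAdd k := by
  simp [lengthHom_gen, mul_inv_cancel_comm, ← ofAdd_zsmul]

lemma lengthHom_conj_gen (m : V → V → ℕ) (g : ArtinGroup m) (s : V) :
    lengthHom m (g * gen m s * g⁻¹) = Multiplicative.ofAdd 1 := by
  simpa using lengthHom_conj_gen_zpow m g s 1

lemma conj_mem_of_smul_mk_eq {G : Type*} [Group G] {H : Subgroup G} {g h : G}
    (hfix : h • (g : G ⧸ H) = g) : g⁻¹ * h * g ∈ H := by
  have hmem : (h * g)⁻¹ * g ∈ H := QuotientGroup.eq.mp hfix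
  simpa [mul_assoc] using H.inv_mem hmem

lemma eq_conj_gen_of_smul_eq (m : V → V → ℕ) {s : V} (g h : ArtinGroup m)
    (hfix : h • (g : ArtinGroup m ⧸ vertSub m s) = g)
    (hlen : lengthHom m h = Multiplicative.ofAdd 1) :
    h = g * gen m s * g⁻¹ := by
  obtain ⟨k, hk⟩ : ∃ k : ℤ, gen m s ^ k = g⁻¹ * h * g := conj_mem_of_smul_mk_eq hfix
  have hh : h = g * gen m s ^ k * g⁻¹ := by rw [hk]; group
  have hk1 : k = 1 := by
    rw [hh, lengthHom_conj_gen_zpow] at hlen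
    exact Multiplicative.ofAdd.injective hlen
  rw [hh, hk1, zpow_one]

lemma conj_gen_eq_of_smul_eq (m : V → V → ℕ) {s : V} (x : ArtinGroup m ⧸ vertSub m s)
    (g₁ g₂ : ArtinGroup m) (s₁ s₂ : V) (hfix₁ : (g₁ * gen m s₁ * g₁⁻¹) • x = x)
    (hfix₂ : (g₂ * gen m s₂ * g₂⁻¹) • x = x) :
    g₁ * gen m s₁ * g₁⁻¹ = g₂ * gen m s₂ * g₂⁻¹ := by
  induction x using QuotientGroup.induction_on with
  | H g =>
    rw [eq_conj_gen_of_smul_eq m g _ hfix₁ (lengthHom_conj_gen m g₁ s₁),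
      eq_conj_gen_of_smul_eq m g _ hfix₂ (lengthHom_conj_gen m g₂ s₂)]

lemma rankOne_mem_fixSet_iff (m : V → V → ℕ) (h : ArtinGroup m) {s : V}
    (x : ArtinGroup m ⧸ vertSub m s) :
    (Sum.inr (Sum.inl ⟨s, x⟩) : DVertex m) ∈ FixSet m h ↔ h • x = x := by
  change (Sum.inr (Sum.inl ⟨s, h • x⟩) : DVertex m) = Sum.inr (Sum.inl ⟨s, x⟩) ↔ _
  simp

theorem stmt7_general (m : V → V → ℕ) :
    ∀ T₁ T₂ : Set (DVertex m), IsStandardTree m T₁ → IsStandardTree m T₂ →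
      (∃ v : DVertex m, IsRankOne m v ∧ v ∈ T₁ ∧ v ∈ T₂) → T₁ = T₂ := by
  rintro _ _ ⟨g₁, s₁, rfl⟩ ⟨g₂, s₂, rfl⟩ ⟨_, ⟨s, x, rfl⟩, hv₁, hv₂⟩
  rw [conj_gen_eq_of_smul_eq m x g₁ g₂ s₁ s₂ ((rankOne_mem_fixSet_iff m _ x).mp hv₁)
    ((rankOne_mem_fixSet_iff m _ x).mp hv₂)]

/-- Lemma 7.3: in the modified Deligne complex of a 2-dimensional Artin group, two
standard trees sharing a rank one vertex are equal. -/
theorem stmt7 (m : V → V → ℕ)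
    (hsymm : ∀ s t, m s t = m t s) (hloop : ∀ s, m s s = 0)
    (h2d : TwoDimensional m) :
    ∀ T₁ T₂ : Set (DVertex m), IsStandardTree m T₁ → IsStandardTree m T₂ →
      (∃ v : DVertex m, IsRankOne m v ∧ v ∈ T₁ ∧ v ∈ T₂) → T₁ = T₂ :=
  stmt7_general m

end ArtinME
end

section
/- Let G be a countable group, Θ a simple graph with countable vertex set on which G acts, and suppose for every finite nonempty vertex set S the setwise stabilizer of S in G equals its pointwise stabilizer. Let 𝒢 be a discrete measured groupoid over a base space Y with a cocycle ρ : 𝒢 → G. If there exists a stably (𝒢,ρ)-invariant Borel map Y → P_f(V(Θ))∖{∅} (to nonempty finite vertex sets), then there exists a stably (𝒢,ρ)-invariant Borel map Y → V(Θ). -/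
open MeasureTheory

/-- A discrete measured groupoid over the standard measure space `(Y, μ)`. -/
structure DMGroupoid (Y : Type*) [MeasurableSpace Y] (μ : Measure Y) where
  /-- the space of arrows -/
  E : Type*
  /-- the Borel structure on the arrows -/
  mE : MeasurableSpace E
  src : E → Y
  rng : E → Y
  measurable_src : @Measurable E Y mE _ src
  measurable_rng : @Measurable E Y mE _ rng
  /-- composition `g₁ ∗ g₂`, defined when `s(g₁) = r(g₂)` -/
  comp : (g₁ g₂ : E) → src g₁ = rng g₂ → E
  src_comp : ∀ g₁ g₂ h, src (comp g₁ g₂ h) = src g₂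
  rng_comp : ∀ g₁ g₂ h, rng (comp g₁ g₂ h) = rng g₁
  unit : Y → E
  src_unit : ∀ y, src (unit y) = y
  rng_unit : ∀ y, rng (unit y) = y
  inv : E → E
  src_inv : ∀ g, src (inv g) = rng g
  rng_inv : ∀ g, rng (inv g) = src g
  comp_assoc : ∀ g₁ g₂ g₃ (h₁ : src g₁ = rng g₂) (h₂ : src g₂ = rng g₃),
    comp (comp g₁ g₂ h₁) g₃ ((src_comp g₁ g₂ h₁).trans h₂) =
      comp g₁ (comp g₂ g₃ h₂) (h₁.trans (rng_comp g₂ g₃ h₂).symm)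
  comp_unit : ∀ g, comp g (unit (src g)) ((rng_unit (src g)).symm) = g
  unit_comp : ∀ g, comp (unit (rng g)) g (src_unit (rng g)) = g
  comp_inv : ∀ g, comp g (inv g) ((rng_inv g).symm) = unit (rng g)
  inv_comp : ∀ g, comp (inv g) g (src_inv g) = unit (src g)
  /-- discreteness: countable fibers -/
  discrete : ∀ y : Y, Set.Countable {g : E | src g = y}
  /-- quasi-invariance of the measure -/
  quasiInvariant : ∀ B : Set E, MeasurableSet[mE] B →
    Set.InjOn src B → Set.InjOn rng B → (μ (src '' B) = 0 ↔ μ (rng '' B) = 0)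

/-- A (Borel) cocycle `ρ : 𝒢 → G` into a countable group: Borel, and multiplicative on
composable pairs over a conull subset of the base. -/
def IsCocycle {Y : Type*} [MeasurableSpace Y] {μ : Measure Y}
    (Gr : DMGroupoid Y μ) {G : Type*} [Group G] (ρ : Gr.E → G) : Prop :=
  (∀ g : G, MeasurableSet[Gr.mE] (ρ ⁻¹' {g})) ∧
  ∃ Y₀ : Set Y, MeasurableSet Y₀ ∧ μ Y₀ᶜ = 0 ∧
    ∀ (g₁ g₂ : Gr.E) (h : Gr.src g₁ = Gr.rng g₂),
      Gr.src g₁ ∈ Y₀ → Gr.rng g₁ ∈ Y₀ → Gr.src g₂ ∈ Y₀ →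
      ρ (Gr.comp g₁ g₂ h) = ρ g₁ * ρ g₂

/-- A Borel map `φ : Y → Ω` (with `Ω` a countable `G`-set) is stably `(𝒢,ρ)`-invariant:
there is a countable Borel partition of `Y` such that `φ` is `(𝒢|_{Y_n},ρ)`-invariant
on each piece, over a conull subset. -/
def StablyInv {Y : Type*} [MeasurableSpace Y] {μ : Measure Y}
    (Gr : DMGroupoid Y μ) {G : Type*} (ρ : Gr.E → G)
    {Ω : Type*} (act : G → Ω → Ω) (φ : Y → Ω) : Prop :=
  (∀ ω : Ω, MeasurableSet (φ ⁻¹' {ω})) ∧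
  ∃ (P : ℕ → Set Y) (Y₀ : Set Y),
    (∀ n, MeasurableSet (P n)) ∧ MeasurableSet Y₀ ∧ μ Y₀ᶜ = 0 ∧
    (∀ i j, i ≠ j → Disjoint (P i) (P j)) ∧ (⋃ n, P n) = Set.univ ∧
    ∀ (n : ℕ) (g : Gr.E), Gr.src g ∈ P n ∩ Y₀ → Gr.rng g ∈ P n ∩ Y₀ →
      φ (Gr.rng g) = act (ρ g) (φ (Gr.src g))

theorem exists_nat_partition_refining {Y ι : Type*} [MeasurableSpace Y] [Countable ι]
    (R : ι → Set Y) (hR : ∀ i, MeasurableSet (R i))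
    (hdisj : ∀ i j, i ≠ j → Disjoint (R i) (R j)) (hcover : ⋃ i, R i = Set.univ) :
    ∃ Q : ℕ → Set Y, (∀ n, MeasurableSet (Q n)) ∧ (∀ m n, m ≠ n → Disjoint (Q m) (Q n)) ∧
      (⋃ n, Q n) = Set.univ ∧ ∀ n, ∀ y ∈ Q n, ∀ y' ∈ Q n, ∃ i, y ∈ R i ∧ y' ∈ R i := by
  obtain ⟨e, he⟩ := Countable.exists_injective_nat ι
  refine ⟨fun n => ⋃ (i) (_ : e i = n), R i,
    fun n => .iUnion fun i => .iUnion fun _ => hR i, ?_, ?_, ?_⟩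
  · intro m n hmn
    refine Set.disjoint_left.2 fun y hym hyn => ?_
    simp only [Set.mem_iUnion] at hym hyn
    obtain ⟨i, rfl, hyi⟩ := hym
    obtain ⟨j, rfl, hyj⟩ := hyn
    have hij : i ≠ j := fun h => hmn (congrArg e h)
    exact Set.disjoint_left.1 (hdisj i j hij) hyi hyj
  · refine Set.iUnion_eq_univ_iff.2 fun y => ?_
    obtain ⟨i, hyi⟩ := Set.mem_iUnion.1 (hcover ▸ Set.mem_univ y)
    exact ⟨e i, Set.mem_biUnion rfl hyi⟩
  · intro n y hy y' hy'
    simp only [Set.mem_iUnion] at hy hy'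
    obtain ⟨i, rfl, hyi⟩ := hy
    obtain ⟨j, hj, hy'j⟩ := hy'
    exact ⟨i, hyi, he hj ▸ hy'j⟩

section StablyInv

variable {Y : Type*} [MeasurableSpace Y] {μ : Measure Y} {Gr : DMGroupoid Y μ}
  {G : Type*} {ρ : Gr.E → G} {Ω Ω' : Type*}

theorem measurableSet_preimage_singleton_of_factors [Countable Ω] {φ : Y → Ω} {ψ : Y → Ω'}
    (hφ : ∀ ω, MeasurableSet (φ ⁻¹' {ω})) (hψφ : ∀ y y', φ y = φ y' → ψ y = ψ y') (ω' : Ω') :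
    MeasurableSet (ψ ⁻¹' {ω'}) := by
  have hfiber : ψ ⁻¹' {ω'} = φ ⁻¹' (φ '' (ψ ⁻¹' {ω'})) := by
    ext y
    constructor
    · exact fun hy => ⟨y, hy, rfl⟩
    · rintro ⟨y', hy', hφy⟩
      exact (hψφ y y' hφy.symm).trans hy'
  rw [hfiber, ← Set.biUnion_preimage_singleton]
  exact .biUnion (Set.to_countable _) fun ω _ => hφ ω

/-- Refining the partition by the (countably many) fibres of `φ` makes `φ` constant on each
piece, so there `ρ` takes values in the stabiliser of the value of `φ`, which fixes `ψ`. -/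
theorem StablyInv.of_factors_of_fixed [Countable Ω] {act : G → Ω → Ω} {act' : G → Ω' → Ω'}
    {φ : Y → Ω} {ψ : Y → Ω'} (hφ : StablyInv Gr ρ act φ)
    (hψφ : ∀ y y', φ y = φ y' → ψ y = ψ y')
    (hfix : ∀ y g, act g (φ y) = φ y → act' g (ψ y) = ψ y) :
    StablyInv Gr ρ act' ψ := by
  obtain ⟨hφmeas, P, Y₀, hPmeas, hY₀, hY₀null, hPdisj, hPcover, hinv⟩ := hφ
  set R : ℕ × Ω → Set Y := fun p => P p.1 ∩ φ ⁻¹' {p.2}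
  have hRdisj : ∀ p q, p ≠ q → Disjoint (R p) (R q) := by
    intro p q hpq
    by_cases h₁ : p.1 = q.1
    · have h₂ : p.2 ≠ q.2 := fun h₂ => hpq (Prod.ext h₁ h₂)
      exact ((Set.disjoint_singleton.2 h₂).preimage φ).mono Set.inter_subset_right
        Set.inter_subset_right
    · exact (hPdisj _ _ h₁).mono Set.inter_subset_left Set.inter_subset_left
  have hRcover : ⋃ p, R p = Set.univ := Set.iUnion_eq_univ_iff.2 fun y => by
    obtain ⟨n, hn⟩ := Set.mem_iUnion.1 (hPcover ▸ Set.mem_univ y)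
    exact ⟨(n, φ y), hn, rfl⟩
  obtain ⟨Q, hQmeas, hQdisj, hQcover, hQsub⟩ := exists_nat_partition_refining R
    (fun p => (hPmeas p.1).inter (hφmeas p.2)) hRdisj hRcover
  refine ⟨measurableSet_preimage_singleton_of_factors hφmeas hψφ, Q, Y₀, hQmeas, hY₀,
    hY₀null, hQdisj, hQcover, fun m g hs hr => ?_⟩
  obtain ⟨⟨n, ω⟩, ⟨hsn, hsω⟩, ⟨hrn, hrω⟩⟩ := hQsub m _ hs.1 _ hr.1
  have hφeq : φ (Gr.rng g) = φ (Gr.src g) := hrω.trans hsω.symm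
  have hstab : act (ρ g) (φ (Gr.src g)) = φ (Gr.src g) :=
    (hinv n g ⟨hsn, hs.2⟩ ⟨hrn, hr.2⟩).symm.trans hφeq
  exact (hψφ _ _ hφeq).trans (hfix _ _ hstab).symm

end StablyInv

theorem stmt15_general {Y : Type*} [MeasurableSpace Y] (μ : Measure Y)
    {G : Type*} [Group G]
    {Vtx : Type*} [Countable Vtx] [DecidableEq Vtx]
    [MulAction G Vtx]
    (hstab : ∀ S : Finset Vtx, S.Nonempty →
      ∀ g : G, S.image (fun v => g • v) = S → ∀ v ∈ S, g • v = v)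
    (Gr : DMGroupoid Y μ) (ρ : Gr.E → G)
    (φ : Y → Finset Vtx) (hφne : ∀ y, (φ y).Nonempty)
    (hφ : StablyInv Gr ρ (fun g S => S.image (fun v => g • v)) φ) :
    ∃ ψ : Y → Vtx, StablyInv Gr ρ (fun g v => g • v) ψ := by
  have hchoose : ∀ y y', φ y = φ y' → (hφne y).choose = (hφne y').choose := by
    intro y y' h
    simp only [h]
  exact ⟨fun y => (hφne y).choose, hφ.of_factors_of_fixed hchoose
    fun y g hg => hstab (φ y) (hφne y) g hg _ (hφne y).choose_spec⟩

/-- Lemma 5.4: if the setwise stabilizer of every nonempty finite vertex set of the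
simple graph `Θ` equals its pointwise stabilizer, then any stably `(𝒢,ρ)`-invariant
Borel map to nonempty finite vertex sets yields a stably `(𝒢,ρ)`-invariant Borel map
to vertices. -/
theorem stmt15 {Y : Type*} [MeasurableSpace Y] (μ : Measure Y)
    {G : Type*} [Group G] [Countable G]
    {Vtx : Type*} [Countable Vtx] [DecidableEq Vtx]
    (Θ : SimpleGraph Vtx) [MulAction G Vtx]
    (hadj : ∀ (g : G) (a b : Vtx), Θ.Adj a b → Θ.Adj (g • a) (g • b))
    (hstab : ∀ S : Finset Vtx, S.Nonempty →
      ∀ g : G, S.image (fun v => g • v) = S → ∀ v ∈ S, g • v = v)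
    (Gr : DMGroupoid Y μ) (ρ : Gr.E → G) (hρ : IsCocycle Gr ρ)
    (φ : Y → Finset Vtx) (hφne : ∀ y, (φ y).Nonempty)
    (hφ : StablyInv Gr ρ (fun g S => S.image (fun v => g • v)) φ) :
    ∃ ψ : Y → Vtx, StablyInv Gr ρ (fun g v => g • v) ψ :=
  stmt15_general μ hstab Gr ρ φ hφne hφ
end

section
/- Let G be a countable group acting on a countable set V, and suppose there is a uniform bound N on the length of chains X₁ ⊆ X₂ ⊆ ··· ⊆ X_k of finite subsets of V whose pointwise stabilizers strictly decrease. Let 𝒢 be a discrete measured groupoid over a standard probability space (Y,μ) with cocycle ρ : 𝒢 → G, and suppose there exists at least one stably (𝒢,ρ)-invariant Borel map Y → P_f(V)∖{∅}. Then there exists a stably (𝒢,ρ)-invariant Borel map θ_max : Y → P_f(V)∖{∅} such that for every stably (𝒢,ρ)-invariant Borel map θ : Y → P_f(V)∖{∅} and almost every y ∈ Y, the pointwise stabilizer of θ_max(y) is contained in the pointwise stabilizer of θ(y). -/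
open MeasureTheory

/-- The pointwise stabilizer of a finite subset of a `G`-set. -/
def pstab (G : Type*) [Group G] {V : Type*} [MulAction G V] (S : Finset V) :
    Subgroup G where
  carrier := {g | ∀ v ∈ S, g • v = v}
  one_mem' := fun v _ => one_smul G v
  mul_mem' := by
    intro a b ha hb v hv
    rw [mul_smul, hb v hv, ha v hv]
  inv_mem' := by
    intro a ha v hv
    calc a⁻¹ • v = a⁻¹ • (a • v) := by rw [ha v hv]
    _ = v := inv_smul_smul a v

/-!
Measure a finite set `X ⊆ V` by its stabilizer rank `stabRank X`: the length of the longest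
chain of finite subsets of `X` along which pointwise stabilizers strictly decrease. It is bounded
by `N`, monotone, and strictly increases when `X` is enlarged to a set with smaller pointwise
stabilizer.
Among nonempty stably invariant maps `θ`, take a sequence whose integrated ranks `∫ stabRank ∘ θ`
approach the supremum and glue them, choosing at each point one of largest rank; the glued map
`θmax` attains the supremum. For any other such `θ`, the map `θmax ∪ θ` is again stably invariant,
so its integrated rank is at most that of `θmax`, while pointwise its rank is at least that of
`θmax` and strictly larger wherever `Pstab(θmax) ⊄ Pstab(θ)`. Hence that set is null.
-/

open scoped ENNReal

section StabRank

variable {G : Type*} [Group G] {V : Type*} [MulAction G V]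

lemma pstab_anti {S T : Finset V} (h : S ⊆ T) : pstab G T ≤ pstab G S :=
  fun _ hg v hv => hg v (h hv)

variable (G) in
def IsStabChain (C : ℕ → Finset V) (k : ℕ) : Prop :=
  (∀ i, i < k → C i ⊆ C (i + 1)) ∧ ∀ i, i < k → pstab G (C (i + 1)) < pstab G (C i)

variable (G) in
noncomputable def stabRank (X : Finset V) : ℕ :=
  sSup {k | ∃ C, IsStabChain G C k ∧ C k ⊆ X}

variable (G V) in
def BoundedStabChains (N : ℕ) : Prop :=
  ∀ k (C : ℕ → Finset V), IsStabChain G C k → k ≤ N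

variable {N : ℕ}

lemma stabRank_le (hN : BoundedStabChains G V N) (X : Finset V) :
    stabRank G X ≤ N :=
  csSup_le' fun _ ⟨C, hC, _⟩ => hN _ C hC

lemma le_stabRank (hN : BoundedStabChains G V N) {C : ℕ → Finset V} {k : ℕ}
    {X : Finset V} (hC : IsStabChain G C k) (hCX : C k ⊆ X) : k ≤ stabRank G X :=
  le_csSup ⟨N, fun _ ⟨C, hC, _⟩ => hN _ C hC⟩ ⟨C, hC, hCX⟩

lemma exists_isStabChain_stabRank (hN : BoundedStabChains G V N) (X : Finset V) :
    ∃ C, IsStabChain G C (stabRank G X) ∧ C (stabRank G X) ⊆ X :=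
  Nat.sSup_mem (s := {k | ∃ C, IsStabChain G C k ∧ C k ⊆ X})
    ⟨0, fun _ => X, ⟨fun i hi => absurd hi i.not_lt_zero, fun i hi => absurd hi i.not_lt_zero⟩,
      subset_rfl⟩
    ⟨N, fun _ ⟨C, hC, _⟩ => hN _ C hC⟩

lemma stabRank_mono (hN : BoundedStabChains G V N) {X X' : Finset V}
    (h : X ⊆ X') : stabRank G X ≤ stabRank G X' :=
  let ⟨_, hC, hCX⟩ := exists_isStabChain_stabRank hN X
  le_stabRank hN hC (hCX.trans h)

lemma stabRank_lt_stabRank (hN : BoundedStabChains G V N) {X X' : Finset V}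
    (hsub : X ⊆ X') (hlt : pstab G X' < pstab G X) : stabRank G X < stabRank G X' := by
  obtain ⟨C, ⟨hCsub, hCstab⟩, hCX⟩ := exists_isStabChain_stabRank hN X
  set k := stabRank G X
  have hlow : ∀ i ≤ k, Function.update C (k + 1) X' i = C i :=
    fun i hi => Function.update_of_ne (by omega) _ _
  have hext : IsStabChain G (Function.update C (k + 1) X') (k + 1) := by
    constructor <;> intro i hi <;> obtain hi | rfl := Nat.lt_succ_iff_lt_or_eq.1 hi
    · rw [hlow i hi.le, hlow (i + 1) hi]; exact hCsub i hi
    · rw [hlow k le_rfl, Function.update_self]; exact hCX.trans hsub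
    · rw [hlow i hi.le, hlow (i + 1) hi]; exact hCstab i hi
    · rw [hlow k le_rfl, Function.update_self]; exact hlt.trans_le (pstab_anti hCX)
  exact le_stabRank hN hext (by rw [Function.update_self])

lemma stabRank_lt_stabRank_union [DecidableEq V] (hN : BoundedStabChains G V N)
    {X T : Finset V} (h : ¬ pstab G X ≤ pstab G T) : stabRank G X < stabRank G (X ∪ T) :=
  stabRank_lt_stabRank hN Finset.subset_union_left <|
    (pstab_anti Finset.subset_union_left).lt_of_ne fun heq =>
      h (heq ▸ pstab_anti Finset.subset_union_right)

end StabRank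

section Fibers

variable {Y Ω : Type*} [MeasurableSpace Y] [Countable Ω] {f : Y → Ω}

lemma measurableSet_preimage_of_measurableSet_fiber (hf : ∀ ω, MeasurableSet (f ⁻¹' {ω}))
    (s : Set Ω) : MeasurableSet (f ⁻¹' s) := by
  rw [← Set.biUnion_preimage_singleton]
  exact .biUnion s.to_countable fun ω _ => hf ω

lemma measurable_comp_of_measurableSet_fiber {β : Type*} [MeasurableSpace β]
    (hf : ∀ ω, MeasurableSet (f ⁻¹' {ω})) (h : Ω → β) : Measurable (h ∘ f) :=
  fun s _ => measurableSet_preimage_of_measurableSet_fiber hf (h ⁻¹' s)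

end Fibers

section StablyInv

variable {Y : Type*} [MeasurableSpace Y] {μ : Measure Y} {Gr : DMGroupoid Y μ} {G : Type*}
  {ρ : Gr.E → G}

lemma StablyInv.of_partition {Ω ι : Type*} [Denumerable ι] {act : G → Ω → Ω} {φ : Y → Ω}
    (hφ : ∀ ω, MeasurableSet (φ ⁻¹' {ω})) (P : ι → Set Y) (Y₀ : Set Y)
    (hP : ∀ i, MeasurableSet (P i)) (hY₀ : MeasurableSet Y₀) (hY₀c : μ Y₀ᶜ = 0)
    (hdisj : Pairwise fun i j => Disjoint (P i) (P j)) (hcover : ⋃ i, P i = Set.univ)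
    (hinv : ∀ i g, Gr.src g ∈ P i ∩ Y₀ → Gr.rng g ∈ P i ∩ Y₀ →
      φ (Gr.rng g) = act (ρ g) (φ (Gr.src g))) :
    StablyInv Gr ρ act φ :=
  let e := (Denumerable.eqv ι).symm
  ⟨hφ, P ∘ e, Y₀, fun _ => hP _, hY₀, hY₀c, fun _ _ hij => hdisj (e.injective.ne hij),
    (e.surjective.iUnion_comp P).trans hcover, fun _ => hinv _⟩

lemma StablyInv.map₂ {Ω₁ Ω₂ Ω : Type*} [Countable Ω₁] [Countable Ω₂] {act₁ : G → Ω₁ → Ω₁}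
    {act₂ : G → Ω₂ → Ω₂} {act : G → Ω → Ω} {φ₁ : Y → Ω₁} {φ₂ : Y → Ω₂} (F : Ω₁ → Ω₂ → Ω)
    (hF : ∀ g a b, F (act₁ g a) (act₂ g b) = act g (F a b))
    (h₁ : StablyInv Gr ρ act₁ φ₁) (h₂ : StablyInv Gr ρ act₂ φ₂) :
    StablyInv Gr ρ act (fun y => F (φ₁ y) (φ₂ y)) := by
  obtain ⟨hm₁, P, Y₁, hP, hY₁, hY₁c, hPd, hPu, hPinv⟩ := h₁
  obtain ⟨hm₂, Q, Y₂, hQ, hY₂, hY₂c, hQd, hQu, hQinv⟩ := h₂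
  have hpair : ∀ ω, MeasurableSet ((fun y => (φ₁ y, φ₂ y)) ⁻¹' {ω}) := fun ω => by
    rw [← Set.singleton_prod_singleton, Set.mk_preimage_prod]
    exact (hm₁ _).inter (hm₂ _)
  refine .of_partition (ι := ℕ × ℕ)
    (fun ω => measurableSet_preimage_of_measurableSet_fiber hpair ((Function.uncurry F) ⁻¹' {ω}))
    (fun i => P i.1 ∩ Q i.2) (Y₁ ∩ Y₂) (fun i => (hP _).inter (hQ _)) (hY₁.inter hY₂)
    (by rw [Set.compl_inter]; exact measure_union_null hY₁c hY₂c) ?_ ?_ ?_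
  · rintro ⟨i₁, i₂⟩ ⟨j₁, j₂⟩ hij
    by_cases h : i₁ = j₁
    · exact (hQd i₂ j₂ fun h' => hij (Prod.ext h h')).mono
        Set.inter_subset_right Set.inter_subset_right
    · exact (hPd i₁ j₁ h).mono Set.inter_subset_left Set.inter_subset_left
  · refine Set.eq_univ_of_forall fun y => ?_
    obtain ⟨i, hi⟩ := Set.mem_iUnion.1 (hPu ▸ Set.mem_univ y)
    obtain ⟨j, hj⟩ := Set.mem_iUnion.1 (hQu ▸ Set.mem_univ y)
    exact Set.mem_iUnion.2 ⟨(i, j), hi, hj⟩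
  · rintro ⟨i, j⟩ g ⟨⟨hsP, hsQ⟩, hs₁, hs₂⟩ ⟨⟨hrP, hrQ⟩, hr₁, hr₂⟩
    rw [hPinv i g ⟨hsP, hs₁⟩ ⟨hrP, hr₁⟩, hQinv j g ⟨hsQ, hs₂⟩ ⟨hrQ, hr₂⟩, hF]

lemma StablyInv.union [Group G] {V : Type*} [Countable V] [DecidableEq V] [MulAction G V]
    {φ ψ : Y → Finset V} (hφ : StablyInv Gr ρ (fun g S => S.image (fun v => g • v)) φ)
    (hψ : StablyInv Gr ρ (fun g S => S.image (fun v => g • v)) ψ) :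
    StablyInv Gr ρ (fun g S => S.image (fun v => g • v)) (fun y => φ y ∪ ψ y) :=
  hφ.map₂ (· ∪ ·) (fun _ _ _ => (Finset.image_union _ _).symm) hψ

lemma StablyInv.glue {Ω : Type*} {act : G → Ω → Ω} {ψ : ℕ → Y → Ω}
    (hψ : ∀ n, StablyInv Gr ρ act (ψ n)) {K : Y → ℕ} (hK : ∀ n, MeasurableSet {y | K y = n}) :
    StablyInv Gr ρ act (fun y => ψ (K y) y) := by
  choose hm P Y₀ hP hY₀ hY₀c hPd hPu hPinv using hψ
  have hfiber : ∀ ω, (fun y => ψ (K y) y) ⁻¹' {ω} = ⋃ n, {y | K y = n} ∩ ψ n ⁻¹' {ω} := by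
    intro ω; ext y; simp
  refine .of_partition (ι := ℕ × ℕ) (fun ω => hfiber ω ▸ .iUnion fun n => (hK n).inter (hm n ω))
    (fun i => {y | K y = i.1} ∩ P i.1 i.2) (⋂ n, Y₀ n) (fun i => (hK _).inter (hP _ _))
    (.iInter hY₀) (by rw [Set.compl_iInter]; exact measure_iUnion_null hY₀c) ?_ ?_ ?_
  · rintro ⟨i₁, i₂⟩ ⟨j₁, j₂⟩ hij
    refine Set.disjoint_left.2 ?_
    rintro y ⟨hyi, hyP⟩ ⟨hyj, hyQ⟩
    have h₁ : i₁ = j₁ := hyi.symm.trans hyj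
    subst h₁
    exact Set.disjoint_left.1 (hPd i₁ i₂ j₂ fun h => hij (Prod.ext rfl h)) hyP hyQ
  · refine Set.eq_univ_of_forall fun y => ?_
    obtain ⟨i, hi⟩ := Set.mem_iUnion.1 (hPu (K y) ▸ Set.mem_univ y)
    exact Set.mem_iUnion.2 ⟨(K y, i), rfl, hi⟩
  · rintro ⟨n, i⟩ g ⟨⟨hsK, hsP⟩, hs₀⟩ ⟨⟨hrK, hrP⟩, hr₀⟩
    have hsK : K (Gr.src g) = n := hsK
    have hrK : K (Gr.rng g) = n := hrK
    simp only [hsK, hrK]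
    exact hPinv n i g ⟨hsP, Set.mem_iInter.1 hs₀ n⟩ ⟨hrP, Set.mem_iInter.1 hr₀ n⟩

end StablyInv

lemma exists_forall_le_of_forall_le {N : ℕ} (f : ℕ → ℕ) (hf : ∀ n, f n ≤ N) :
    ∃ k, ∀ n, f n ≤ f k := by
  have hbdd : BddAbove (Set.range f) := ⟨N, Set.forall_mem_range.2 hf⟩
  obtain ⟨k, hk⟩ := Nat.sSup_mem (Set.range_nonempty f) hbdd
  exact ⟨k, fun n => hk ▸ le_csSup hbdd ⟨n, rfl⟩⟩

lemma exists_forall_lintegral_le {Y Ω : Type*} [MeasurableSpace Y] {μ : Measure Y} {N : ℕ}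
    (r : Ω → ℕ) (hr : ∀ ω, r ω ≤ N) (p : (Y → Ω) → Prop)
    (hmeas : ∀ θ, p θ → Measurable fun y => r (θ y))
    (hglue : ∀ (ψ : ℕ → Y → Ω) (K : Y → ℕ), (∀ n, p (ψ n)) →
      (∀ n, MeasurableSet {y | K y = n}) → p fun y => ψ (K y) y)
    (hp : ∃ θ, p θ) :
    ∃ θmax, p θmax ∧ ∀ θ, p θ → ∫⁻ y, (r (θ y) : ℝ≥0∞) ∂μ ≤ ∫⁻ y, (r (θmax y) : ℝ≥0∞) ∂μ := by
  classical
  set S := {a | ∃ θ, p θ ∧ ∫⁻ y, (r (θ y) : ℝ≥0∞) ∂μ = a}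
  have hS : S.Nonempty := let ⟨θ, hθ⟩ := hp; ⟨_, θ, hθ, rfl⟩
  obtain ⟨u, -, hu, huS⟩ := exists_seq_tendsto_sSup hS (OrderTop.bddAbove S)
  choose ψ hψ hψu using huS
  have hK : ∀ y, ∃ k, ∀ n, r (ψ n y) ≤ r (ψ k y) :=
    fun y => exists_forall_le_of_forall_le _ fun n => hr (ψ n y)
  let K y := Nat.find (hK y)
  have hB : ∀ k, MeasurableSet {y | ∀ n, r (ψ n y) ≤ r (ψ k y)} := fun k => by
    simpa only [Set.ofPred_forall] using
      .iInter fun n => measurableSet_le (hmeas _ (hψ n)) (hmeas _ (hψ k))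
  have hKmeas : ∀ k, MeasurableSet {y | K y = k} := by
    intro k
    have hKk : {y | K y = k} = {y | ∀ n, r (ψ n y) ≤ r (ψ k y)} ∩
        ⋂ j < k, {y | ∀ n, r (ψ n y) ≤ r (ψ j y)}ᶜ := by
      ext y
      simp [K, Nat.find_eq_iff]
    rw [hKk]
    exact (hB k).inter (.iInter fun j => .iInter fun _ => (hB j).compl)
  refine ⟨_, hglue ψ K hψ hKmeas, fun θ hθ => ?_⟩
  calc ∫⁻ y, (r (θ y) : ℝ≥0∞) ∂μ ≤ sSup S := le_sSup ⟨θ, hθ, rfl⟩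
    _ ≤ ∫⁻ y, (r (ψ (K y) y) : ℝ≥0∞) ∂μ := le_of_tendsto' hu fun n => hψu n ▸
        lintegral_mono fun y => Nat.cast_le.2 (Nat.find_spec (hK y) n)

theorem stmt16_general {Y : Type*} [MeasurableSpace Y] (μ : Measure Y) [IsProbabilityMeasure μ]
    {G : Type*} [Group G]
    {V : Type*} [Countable V] [DecidableEq V] [MulAction G V]
    (N : ℕ)
    (hchain : ∀ (k : ℕ) (X : ℕ → Finset V),
      (∀ i, i < k → X i ⊆ X (i + 1)) →
      (∀ i, i < k → pstab G (X (i + 1)) < pstab G (X i)) → k ≤ N)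
    (Gr : DMGroupoid Y μ) (ρ : Gr.E → G)
    (hex : ∃ φ : Y → Finset V, (∀ y, (φ y).Nonempty) ∧
      StablyInv Gr ρ (fun g S => S.image (fun v => g • v)) φ) :
    ∃ θmax : Y → Finset V, (∀ y, (θmax y).Nonempty) ∧
      StablyInv Gr ρ (fun g S => S.image (fun v => g • v)) θmax ∧
      ∀ θ : Y → Finset V, (∀ y, (θ y).Nonempty) →
        StablyInv Gr ρ (fun g S => S.image (fun v => g • v)) θ →
        ∀ᵐ y ∂μ, pstab G (θmax y) ≤ pstab G (θ y) := by
  have hN : BoundedStabChains G V N := fun k C hC => hchain k C hC.1 hC.2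
  obtain ⟨θmax, ⟨hne, hinv⟩, hmax⟩ := exists_forall_lintegral_le (μ := μ) (stabRank G)
    (stabRank_le hN) _ (fun θ hθ => measurable_comp_of_measurableSet_fiber hθ.2.1 (stabRank G))
    (fun ψ K hψ hK => ⟨fun y => (hψ (K y)).1 y, StablyInv.glue (fun n => (hψ n).2) hK⟩) hex
  refine ⟨θmax, hne, hinv, fun θ _ hθ => ?_⟩
  have hunion := hinv.union hθ
  have hae : (fun y => (stabRank G (θmax y) : ℝ≥0∞)) =ᵐ[μ]
      fun y => (stabRank G (θmax y ∪ θ y) : ℝ≥0∞) :=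
    ae_eq_of_ae_le_of_lintegral_le
      (ae_of_all _ fun y => Nat.cast_le.2 (stabRank_mono hN Finset.subset_union_left))
      (IsFiniteMeasure.lintegral_lt_top_of_bounded_to_ennreal μ
        ⟨N, fun y => by exact_mod_cast stabRank_le hN (θmax y)⟩).ne
      (measurable_comp_of_measurableSet_fiber hunion.1
        fun S => (stabRank G S : ℝ≥0∞)).aemeasurable
      (hmax _ ⟨fun y => (hne y).mono Finset.subset_union_left, hunion⟩)
  filter_upwards [hae] with y hy
  by_contra h
  exact (stabRank_lt_stabRank_union hN h).ne (by exact_mod_cast hy)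

/-- Lemma 5.5: existence of a stably invariant Borel map to nonempty finite vertex sets
of maximal type — one whose pointwise stabilizer is a.e. contained in that of any other
stably invariant map — under a uniform bound on chains of finite sets with strictly
decreasing pointwise stabilizers. -/
theorem stmt16 {Y : Type*} [MeasurableSpace Y] (μ : Measure Y) [IsProbabilityMeasure μ]
    {G : Type*} [Group G] [Countable G]
    {V : Type*} [Countable V] [DecidableEq V] [MulAction G V]
    (N : ℕ)
    (hchain : ∀ (k : ℕ) (X : ℕ → Finset V),
      (∀ i, i < k → X i ⊆ X (i + 1)) →
      (∀ i, i < k → pstab G (X (i + 1)) < pstab G (X i)) → k ≤ N)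
    (Gr : DMGroupoid Y μ) (ρ : Gr.E → G) (hρ : IsCocycle Gr ρ)
    (hex : ∃ φ : Y → Finset V, (∀ y, (φ y).Nonempty) ∧
      StablyInv Gr ρ (fun g S => S.image (fun v => g • v)) φ) :
    ∃ θmax : Y → Finset V, (∀ y, (θmax y).Nonempty) ∧
      StablyInv Gr ρ (fun g S => S.image (fun v => g • v)) θmax ∧
      ∀ θ : Y → Finset V, (∀ y, (θ y).Nonempty) →
        StablyInv Gr ρ (fun g S => S.image (fun v => g • v)) θ →
        ∀ᵐ y ∂μ, pstab G (θmax y) ≤ pstab G (θ y) :=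
  stmt16_general μ N hchain Gr ρ hex
end
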